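/- arXiv:math/0609611 — 8 statements merged into one kernel-verified Lean document; each statement's English description precedes it below -/
import Mathlib

section
/- If S is a subgroup of a group Γ and S is separable in a finite-index subgroup H of Γ with S ≤ H, then S is separable in Γ. -/
open scoped Pointwise

/-- `S` is separable in `G` if for every `x ∈ G \ S` there is a finite-index
normal subgroup `N` of `G` with `x ∉ S·N`. -/
def SubgroupSeparable {G : Type*} [Group G] (S : Subgroup G) : Prop :=
  ∀ x : G, x ∉ S → ∃ N : Subgroup G, N.Normal ∧ N.FiniteIndex ∧
    x ∉ (S : Set G) * (N : Set G)

/-!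
If `x ∈ H \ S`, separability in `H` gives a finite-index `N ≤ H` with `x ∉ S·N`, and `N` still has
finite index in `Γ` because `H` does. If `x ∉ H`, then `N = H` works since `S·H = H`. Normality
costs nothing: passing to the normal core keeps the index finite and only shrinks `S·N`.
-/

namespace Subgroup

variable {G : Type*} [Group G]

instance finiteIndex_map_subtype {H : Subgroup G} [H.FiniteIndex] (K : Subgroup H)
    [K.FiniteIndex] : (K.map H.subtype).FiniteIndex :=
  ⟨by rw [index_map_subtype]; exact mul_ne_zero FiniteIndex.index_ne_zero FiniteIndex.index_ne_zero⟩

theorem image_subtype_subgroupOf_mul {H S : Subgroup G} (hSH : S ≤ H) (K : Subgroup H) :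
    H.subtype '' ((S.subgroupOf H : Set H) * K) = (S : Set G) * K.map H.subtype := by
  rw [Set.image_mul, ← coe_map, map_subgroupOf_eq_of_le hSH, coe_map]

end Subgroup

open Subgroup

theorem subgroupSeparable_iff_exists_finiteIndex {G : Type*} [Group G] (S : Subgroup G) :
    SubgroupSeparable S ↔ ∀ x ∉ S, ∃ N : Subgroup G, N.FiniteIndex ∧ x ∉ (S : Set G) * N := by
  refine ⟨fun h x hx => ?_, fun h x hx => ?_⟩
  · obtain ⟨N, -, hN, hxN⟩ := h x hx
    exact ⟨N, hN, hxN⟩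
  · obtain ⟨N, hN, hxN⟩ := h x hx
    exact ⟨N.normalCore, normalCore_normal N, inferInstance,
      fun hx' => hxN (Set.mul_subset_mul_left (normalCore_le N) hx')⟩

/-- If `S ≤ H ≤ Γ` with `H` of finite index in `Γ` and `S` separable in `H`,
then `S` is separable in `Γ`. -/
theorem separable_of_separable_in_finite_index {Γ : Type*} [Group Γ]
    (H : Subgroup Γ) (S : Subgroup Γ) (hSH : S ≤ H) (hH : H.FiniteIndex)
    (hsep : SubgroupSeparable (S.subgroupOf H)) :
    SubgroupSeparable S := by
  rw [subgroupSeparable_iff_exists_finiteIndex]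
  intro x hx
  by_cases hxH : x ∈ H
  · obtain ⟨N, -, hN, hxN⟩ := hsep ⟨x, hxH⟩ (by rwa [mem_subgroupOf])
    refine ⟨N.map H.subtype, inferInstance, ?_⟩
    rwa [← image_subtype_subgroupOf_mul hSH, ← show H.subtype ⟨x, hxH⟩ = x from rfl,
      H.subtype_injective.mem_set_image]
  · exact ⟨H, hH, fun hxSH => hxH (mul_subset (SetLike.coe_subset_coe.mpr hSH) subset_rfl hxSH)⟩
end

section
/- Let L be a subgroup of a group G and let S be a subgroup of G containing a finite-index subgroup T that normalizes L. Then M = ⋂_{s ∈ S} L^s (the intersection of all S-conjugates of L) has finite index in L. -/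
/-!
The conjugate `s⁻¹ L s` only depends on the right coset `T s`, because `T` normalizes `L`. Hence
`M` is the intersection of at most `[S : T]` conjugates of `L`. Each of them has the same finite
index in the normal subgroup `K` as `L`, so `M` has finite index in `K`, and a fortiori in `L`.
-/

namespace Subgroup

variable {G : Type*} [Group G]

lemma iInf_mem_inv {α : Type*} [CompleteLattice α] (S : Subgroup G) (f : G → α) :
    ⨅ s ∈ S, f s⁻¹ = ⨅ s ∈ S, f s :=
  le_antisymm
    (le_iInf₂ fun s hs => by simpa using biInf_le (fun g => f g⁻¹) (S.inv_mem hs))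
    (le_iInf₂ fun s hs => biInf_le f (S.inv_mem hs))

lemma iInf_mem_eq_iInf_quotient_out {α : Type*} [CompleteLattice α] {S T : Subgroup G}
    {f : G → α} (hf : ∀ g, ∀ t ∈ T, f (g * t) = f g) :
    ⨅ s ∈ S, f s = ⨅ q : S ⧸ T.subgroupOf S, f q.out :=
  le_antisymm (le_iInf fun q => biInf_le f q.out.2) <| le_iInf₂ fun s hs => by
    obtain ⟨t, hout⟩ := QuotientGroup.mk_out_eq_mul (T.subgroupOf S) ⟨s, hs⟩
    calc ⨅ q : S ⧸ T.subgroupOf S, f q.out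
        ≤ f (QuotientGroup.mk (s := T.subgroupOf S) ⟨s, hs⟩).out := iInf_le _ _
      _ = f s := by rw [hout]; exact hf s t t.2

lemma map_conj_mul_of_mem_normalizer {L : Subgroup G} (g : G) {t : G}
    (ht : t ∈ normalizer (L : Set G)) :
    L.map (MulAut.conj (g * t)).toMonoidHom = L.map (MulAut.conj g).toMonoidHom := by
  conv_rhs => rw [← mem_normalizer_iff_map_conj_eq.mp ht, map_map]
  congr 1
  ext
  simp [mul_assoc]

lemma relIndex_map_conj_of_normal (L : Subgroup G) {K : Subgroup G} [K.Normal] (g : G) :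
    (L.map (MulAut.conj g).toMonoidHom).relIndex K = L.relIndex K := by
  conv_rhs => rw [← relIndex_map_map_of_injective (f := (MulAut.conj g).toMonoidHom) L K
    (MulAut.conj g).injective]
  congr 1
  exact (Normal.map_conj_eq K g).symm

end Subgroup

open Subgroup in
theorem inf_conjugates_finiteIndex_general {G : Type*} [Group G]
    (K L S T : Subgroup G) (hK : K.Normal) (hLK : L ≤ K)
    (hL : (L.subgroupOf K).FiniteIndex)
    (hT : (T.subgroupOf S).FiniteIndex)
    (hnorm : T ≤ Subgroup.normalizer (L : Set G)) :
    ((⨅ s ∈ S, L.map (MulAut.conj (s⁻¹)).toMonoidHom).subgroupOf L).FiniteIndex := by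
  have hMK : (⨅ s ∈ S, L.map (MulAut.conj (s⁻¹)).toMonoidHom).relIndex K ≠ 0 := by
    rw [iInf_mem_inv S (fun g => L.map (MulAut.conj g).toMonoidHom),
      iInf_mem_eq_iInf_quotient_out fun g t ht => map_conj_mul_of_mem_normalizer g (hnorm ht)]
    exact relIndex_iInf_ne_zero fun q =>
      (relIndex_map_conj_of_normal L _).trans_ne hL.index_ne_zero
  exact ⟨mt (relIndex_eq_zero_of_le_right hLK) hMK⟩

/-- Let `K` be a normal subgroup of `G`, `L ≤ K` of finite index in `K`,
and `S` a subgroup containing a subgroup `T` of finite index in `S` with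
every element of `T` normalizing `L`.  Then the intersection
`M = ⋂_{s ∈ S} s⁻¹ L s` of all `S`-conjugates of `L` has finite index in `L`. -/
theorem inf_conjugates_finiteIndex {G : Type*} [Group G]
    (K L S T : Subgroup G) (hK : K.Normal) (hLK : L ≤ K)
    (hL : (L.subgroupOf K).FiniteIndex)
    (hTS : T ≤ S) (hT : (T.subgroupOf S).FiniteIndex)
    (hnorm : T ≤ Subgroup.normalizer (L : Set G)) :
    ((⨅ s ∈ S, L.map (MulAut.conj (s⁻¹)).toMonoidHom).subgroupOf L).FiniteIndex :=
  inf_conjugates_finiteIndex_general K L S T hK hLK hL hT hnorm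
end

section
/- Let Γ = K ⋊ S be a semidirect product of an abelian normal subgroup K by a finitely generated subgroup S, and suppose Γ is finitely generated and residually finite. Then the closure of S in the profinite topology of Γ intersects K trivially, and consequently S is separable in Γ. -/
open scoped Pointwise

/-- The profinite topology on a group: generated by cosets of finite-index
normal subgroups. -/
def profiniteTopology (G : Type*) [Group G] : TopologicalSpace G :=
  TopologicalSpace.generateFrom
    {U : Set G | ∃ (N : Subgroup G) (g : G), N.Normal ∧ N.FiniteIndex ∧
      U = {x : G | ∃ n ∈ N, x = g * n}}

/-!
Write `x ∈ closure S` as `x = k * s` with `k ∈ K`, `s ∈ S`. For a finite-index normal subgroup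
`N`, the subgroup `H = (K ⊓ N) ⊔ S` has finite index (the cosets of `H` are already represented
by `K`), so it is closed and contains `closure S`; hence `k ∈ K ⊓ H`, which is `K ⊓ N` by the
modular law since `K ⊓ S = ⊥`. So `k` lies in every finite-index normal subgroup, and residual
finiteness forces `k = 1`, i.e. `x ∈ S`.
-/

namespace Subgroup

variable {G : Type*} [Group G]

theorem index_eq_relIndex_of_sup_eq_top {H K : Subgroup G} [K.Normal] (h : K ⊔ H = ⊤) :
    H.index = H.relIndex K := by
  have horbit : MulAction.orbit K ((1 : G) : G ⧸ H) = Set.univ := by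
    refine Set.eq_univ_of_forall fun y => ?_
    obtain ⟨g, rfl⟩ := QuotientGroup.mk_surjective y
    have hg : g ∈ (K : Set G) * H := by rw [← normal_mul, h]; trivial
    obtain ⟨k, hk, h', hh', rfl⟩ := hg
    refine ⟨⟨k, hk⟩, ?_⟩
    show (k • ((1 : G) : G ⧸ H)) = _
    rw [MulAction.Quotient.smul_mk, smul_eq_mul, mul_one, QuotientGroup.eq, inv_mul_cancel_left]
    exact hh'
  have hstab : MulAction.stabilizer K ((1 : G) : G ⧸ H) = H.subgroupOf K := by
    ext k
    show ((k : G) • ((1 : G) : G ⧸ H)) = _ ↔ _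
    rw [MulAction.Quotient.smul_mk, smul_eq_mul, mul_one, QuotientGroup.eq, mul_one, inv_mem_iff,
      mem_subgroupOf]
  rw [relIndex, ← hstab, MulAction.index_stabilizer, horbit, Set.ncard_univ, index_eq_card]

theorem inf_sup_eq_of_le_of_inf_eq_bot {K M S : Subgroup G} [M.Normal] (hMK : M ≤ K)
    (hKS : K ⊓ S = ⊥) :
    K ⊓ (M ⊔ S) = M := by
  apply SetLike.coe_injective
  rw [coe_inf, normal_mul M S, Set.inter_comm, ← mul_inf_assoc M S K hMK, inf_comm, hKS, coe_bot,
    Set.mul_singleton]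
  simp

theorem finiteIndex_inf_sup_of_sup_eq_top {K S N : Subgroup G} [K.Normal] [N.FiniteIndex]
    (h : K ⊔ S = ⊤) :
    ((K ⊓ N) ⊔ S).FiniteIndex := by
  have hsup : K ⊔ ((K ⊓ N) ⊔ S) = ⊤ := top_unique (h ▸ sup_le_sup_left le_sup_right K)
  constructor
  rw [index_eq_relIndex_of_sup_eq_top hsup]
  refine mt (relIndex_eq_zero_of_le_left le_sup_left) ?_
  rw [inf_relIndex_left]
  exact (isFiniteRelIndex_of_finiteIndex (H := N) (K := K)).relIndex_ne_zero

end Subgroup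

open Topology

theorem isClosed_profiniteTopology_of_finiteIndex {G : Type*} [Group G] (H : Subgroup G)
    [H.FiniteIndex] : IsClosed[profiniteTopology G] (H : Set G) := by
  let _ := profiniteTopology G
  rw [← isOpen_compl_iff, isOpen_iff_forall_mem_open]
  intro g hg
  refine ⟨{x | ∃ n ∈ H.normalCore, x = g * n}, ?_,
    TopologicalSpace.isOpen_generateFrom_of_mem
      ⟨H.normalCore, g, H.normalCore_normal, inferInstance, rfl⟩,
    ⟨1, one_mem _, (mul_one g).symm⟩⟩
  rintro _ ⟨n, hn, rfl⟩ hgn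
  exact hg (by simpa using H.mul_mem hgn (H.inv_mem (H.normalCore_le hn)))

theorem isClosed_profiniteTopology_of_complement {Γ : Type*} [Group Γ] {K S : Subgroup Γ}
    [K.Normal] (hdisj : K ⊓ S = ⊥) (hjoin : K ⊔ S = ⊤)
    (hrf : ∀ x : Γ, x ≠ 1 → ∃ N : Subgroup Γ, N.Normal ∧ N.FiniteIndex ∧ x ∉ N) :
    IsClosed[profiniteTopology Γ] (S : Set Γ) := by
  let _ := profiniteTopology Γ
  refine closure_subset_iff_isClosed.mp fun x hx => ?_
  obtain ⟨k, hk, s, hs, rfl⟩ : x ∈ (K : Set Γ) * S := by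
    rw [← Subgroup.normal_mul, hjoin]; trivial
  suffices k = 1 by simpa [this] using hs
  by_contra hk1
  obtain ⟨N, hN, hNfin, hkN⟩ := hrf k hk1
  set H := (K ⊓ N) ⊔ S
  have : H.FiniteIndex := Subgroup.finiteIndex_inf_sup_of_sup_eq_top hjoin
  have hSH : S ≤ H := le_sup_right
  have hxH : k * s ∈ H :=
    closure_minimal (SetLike.coe_subset_coe.mpr hSH)
      (isClosed_profiniteTopology_of_finiteIndex H) hx
  have hkH : k ∈ K ⊓ H := ⟨hk, by simpa using H.mul_mem hxH (H.inv_mem (hSH hs))⟩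
  rw [Subgroup.inf_sup_eq_of_le_of_inf_eq_bot inf_le_left hdisj] at hkH
  exact hkN hkH.2

theorem closure_inter_abelian_kernel_trivial_general {Γ : Type*} [Group Γ]
    (K S : Subgroup Γ) (hKn : K.Normal)
    (hdisj : K ⊓ S = ⊥) (hjoin : K ⊔ S = ⊤)
    (hrf : ∀ x : Γ, x ≠ 1 → ∃ N : Subgroup Γ, N.Normal ∧ N.FiniteIndex ∧ x ∉ N) :
    (@closure Γ (profiniteTopology Γ) (S : Set Γ)) ∩ (K : Set Γ) = {1} ∧
      @IsClosed Γ (profiniteTopology Γ) (S : Set Γ) := by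
  let _ := profiniteTopology Γ
  have hS := isClosed_profiniteTopology_of_complement hdisj hjoin hrf
  refine ⟨?_, hS⟩
  rw [hS.closure_eq, ← Subgroup.coe_inf, inf_comm, hdisj, Subgroup.coe_bot]

/-- If `Γ = K ⋊ S` with `K` abelian normal and `S` finitely generated, and `Γ`
is finitely generated and residually finite, then the profinite closure of `S`
meets `K` trivially; consequently `S` is closed in the profinite topology. -/
theorem closure_inter_abelian_kernel_trivial {Γ : Type*} [Group Γ]
    (K S : Subgroup Γ) (hKn : K.Normal)
    (hKab : ∀ x y : Γ, x ∈ K → y ∈ K → x * y = y * x)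
    (hdisj : K ⊓ S = ⊥) (hjoin : K ⊔ S = ⊤)
    (hSfg : S.FG) (hfg : Group.FG Γ)
    (hrf : ∀ x : Γ, x ≠ 1 → ∃ N : Subgroup Γ, N.Normal ∧ N.FiniteIndex ∧ x ∉ N) :
    (@closure Γ (profiniteTopology Γ) (S : Set Γ)) ∩ (K : Set Γ) = {1} ∧
      @IsClosed Γ (profiniteTopology Γ) (S : Set Γ) :=
  closure_inter_abelian_kernel_trivial_general K S hKn hdisj hjoin hrf
end

section
/- If A and Q are finitely generated abelian groups, then the restricted wreath product A ≀ Q is finitely generated and residually finite. -/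
/-- The restricted direct power `A^{(Q)}`: finitely supported functions
`Q → A` under pointwise multiplication. -/
abbrev RestrictedPower (Q A : Type*) [Group A] : Type _ :=
  Multiplicative (Q →₀ Additive A)

/-- Translation of coordinates by `q : Q`, as an additive automorphism of
`Q →₀ Additive A`. -/
def translationAut {A Q : Type*} [Group A] [Group Q] (q : Q) :
    (Q →₀ Additive A) ≃+ (Q →₀ Additive A) :=
  { Finsupp.equivCongrLeft (Equiv.mulLeft q) with
    map_add' := fun f g => by
      ext x
      simp [Finsupp.equivCongrLeft, Finsupp.equivMapDomain_apply] }

/-- `Q` acts on `A^{(Q)}` by translation of coordinates. -/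
noncomputable def wreathAction (A Q : Type*) [Group A] [Group Q] :
    Q →* MulAut (RestrictedPower Q A) where
  toFun q := AddEquiv.toMultiplicative (translationAut (A := A) q)
  map_one' := by
    apply MulEquiv.toEquiv_injective
    ext f : 1
    refine Multiplicative.toAdd.injective ?_
    ext x
    simp [translationAut, Finsupp.equivCongrLeft, Finsupp.equivMapDomain_apply]
    rfl
  map_mul' q₁ q₂ := by
    apply MulEquiv.toEquiv_injective
    ext f : 1
    refine Multiplicative.toAdd.injective ?_
    ext x
    have h : (Equiv.mulLeft q₁ * Equiv.mulLeft q₂).symm x = q₂⁻¹ * (q₁⁻¹ * x) := rfl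
    simp [translationAut, Finsupp.equivCongrLeft, Finsupp.equivMapDomain_apply, h]

/-- The restricted wreath product `A ≀ Q = A^{(Q)} ⋊ Q`. -/
abbrev WreathProduct (A Q : Type*) [Group A] [Group Q] : Type _ :=
  SemidirectProduct (RestrictedPower Q A) Q (wreathAction A Q)

/-!
The wreath product is generated by `Q` together with the copy of `A` at coordinate `1`, since
translating that copy by `Q` reaches every coordinate; so it is finitely generated.

Finitely generated abelian groups are residually finite, by the structure theorem. A nontrivial
element of `A ≀ Q` either has nontrivial image in `Q`, which a finite quotient of `Q` detects, or
is a nonzero finitely supported `f : Q → A`. In the latter case pick `q` with `f q ≠ 1`, a finite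
quotient `A ⧸ N` in which `f q` survives, and a finite quotient `Q ⧸ M` injective on the support
of `f`. The induced map `A ≀ Q → (A ⧸ N) ≀ (Q ⧸ M)` into a finite group does not kill `f`: the
coordinate at the image of `q` only receives the contribution of `f q`.
-/

open Multiplicative SemidirectProduct

namespace Group

variable {G G' : Type*} [Group G] [Group G']

theorem ResiduallyFinite.of_injective [ResiduallyFinite G'] {f : G →* G'}
    (hf : Function.Injective f) : ResiduallyFinite G := by
  rw [residuallyFinite_iff_forall_finiteIndexNormalSubgroup]
  intro g hg
  exact hf <| (eq_one_iff_forall_finiteIndexNormalSubroup (f g) fun K => hg (K.comap f)).trans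
    f.map_one.symm

instance {ι : Type*} {G : ι → Type*} [∀ i, Group (G i)] [∀ i, ResiduallyFinite (G i)] :
    ResiduallyFinite (∀ i, G i) := by
  rw [residuallyFinite_iff_forall_finiteIndexNormalSubgroup]
  intro g hg
  funext i
  exact eq_one_iff_forall_finiteIndexNormalSubroup (g i) fun K =>
    hg (K.comap (Pi.evalMonoidHom G i))

instance : ResiduallyFinite (Multiplicative ℤ) :=
  residuallyFinite_of_forall_exists_finite_monoidHom fun n hn =>
    ⟨Multiplicative (ZMod (n.toAdd.natAbs + 1)), inferInstance, inferInstance,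
      (Int.castAddHom _).toMultiplicative, fun h => hn <| by
        have hdvd := (ZMod.intCast_zmod_eq_zero_iff_dvd n.toAdd (n.toAdd.natAbs + 1)).mp h
        exact congrArg ofAdd (Int.eq_zero_of_dvd_of_natAbs_lt_natAbs hdvd
          (by rw [Int.natAbs_natCast]; exact Nat.lt_succ_self _))⟩

instance _root_.CommGroup.residuallyFinite_of_fg {G : Type*} [CommGroup G] [FG G] :
    ResiduallyFinite G := by
  obtain ⟨ι, _, _, _, p, hp, e, ⟨φ⟩⟩ := CommGroup.equiv_free_prod_prod_multiplicative_zmod G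
  have : ∀ i, NeZero (p i ^ e i) := fun i => ⟨pow_ne_zero _ (hp i).ne_zero⟩
  exact .of_injective (f := φ.toMonoidHom) φ.injective

theorem exists_finiteIndexNormalSubgroup_forall_notMem [ResiduallyFinite G] (s : Finset G)
    (hs : (1 : G) ∉ s) : ∃ H : FiniteIndexNormalSubgroup G, ∀ g ∈ s, g ∉ H := by
  classical
  induction s using Finset.induction_on with
  | empty => exact ⟨.ofSubgroup ⊤, by simp⟩
  | insert a s _ ih =>
    obtain ⟨H, hH⟩ := ih fun h => hs (Finset.mem_insert_of_mem h)
    obtain ⟨K, hK⟩ := exists_finiteIndexNormalSubgroup_notMem a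
      fun h => hs (h ▸ Finset.mem_insert_self a s)
    exact ⟨H ⊓ K, (Finset.forall_mem_insert _ _ _).mpr ⟨fun h => hK h.2, fun g hg h => hH g hg h.1⟩⟩

theorem exists_finiteIndexNormalSubgroup_injOn [ResiduallyFinite G] (s : Finset G) :
    ∃ H : FiniteIndexNormalSubgroup G, Set.InjOn (QuotientGroup.mk : G → G ⧸ H.toSubgroup) s := by
  classical
  obtain ⟨H, hH⟩ := exists_finiteIndexNormalSubgroup_forall_notMem
    (s.offDiag.image fun p => p.1⁻¹ * p.2) (by simp [inv_mul_eq_one])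
  exact ⟨H, fun x hx y hy hxy => by_contra fun hne => hH (x⁻¹ * y)
    (Finset.mem_image.mpr ⟨(x, y), Finset.mem_offDiag.mpr ⟨hx, hy, hne⟩, rfl⟩)
    (QuotientGroup.eq.mp hxy)⟩

end Group

namespace WreathProduct

instance {A Q : Type*} [Group A] [Group Q] [Finite A] [Finite Q] : Finite (WreathProduct A Q) :=
  have : Finite (Q →₀ Additive A) := Finite.of_equiv _ Finsupp.equivFunOnFinite.symm
  Finite.of_equiv _ SemidirectProduct.equivProd.symm

section Generation

variable {A Q : Type*} [Group A] [Group Q]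

variable (A Q) in
noncomputable def singleOne : A →* WreathProduct A Q :=
  inl.comp (Finsupp.singleAddHom (1 : Q) : Additive A →+ (Q →₀ Additive A)).toMultiplicativeRight

theorem wreathAction_ofAdd_single (q p : Q) (a : Additive A) :
    wreathAction A Q q (ofAdd (Finsupp.single p a)) = ofAdd (Finsupp.single (q * p) a) :=
  congrArg ofAdd (Finsupp.equivMapDomain_single _ _ _)

theorem range_inr_sup_range_singleOne :
    (inr : Q →* WreathProduct A Q).range ⊔ (singleOne A Q).range = ⊤ := by
  set H := (inr : Q →* WreathProduct A Q).range ⊔ (singleOne A Q).range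
  have hinr (q : Q) : inr q ∈ H := Subgroup.mem_sup_left ⟨q, rfl⟩
  have hsingle (q : Q) (a : Additive A) : inl (ofAdd (Finsupp.single q a)) ∈ H := by
    rw [← mul_one q, ← wreathAction_ofAdd_single, inl_aut]
    exact mul_mem (mul_mem (hinr q) (Subgroup.mem_sup_right ⟨a.toMul, rfl⟩)) (hinr q⁻¹)
  have hinl (f : Q →₀ Additive A) : inl (ofAdd f) ∈ H := by
    induction f using Finsupp.induction with
    | zero => simpa only [ofAdd_zero, map_one] using one_mem H
    | single_add q a f _ _ ih =>
      simpa only [ofAdd_add, map_mul] using mul_mem (hsingle q a) ih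
  exact eq_top_iff.mpr fun x _ =>
    inl_left_mul_inr_right x ▸ mul_mem (hinl x.left.toAdd) (hinr x.right)

instance [Group.FG A] [Group.FG Q] : Group.FG (WreathProduct A Q) := by
  rw [Group.fg_def, ← range_inr_sup_range_singleOne]
  exact ((Group.fg_iff_subgroup_fg _).mp inferInstance).sup
    ((Group.fg_iff_subgroup_fg _).mp inferInstance)

end Generation

section Functoriality

variable {A A' Q Q' : Type*} [CommGroup A] [CommGroup A'] [Group Q] [Group Q']

noncomputable def baseMap (φ : A →* A') (ψ : Q →* Q') :
    RestrictedPower Q A →* RestrictedPower Q' A' :=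
  AddMonoidHom.toMultiplicative
    ((Finsupp.mapDomain.addMonoidHom ψ).comp (Finsupp.mapRange.addMonoidHom φ.toAdditive))

theorem baseMap_comp_wreathAction (φ : A →* A') (ψ : Q →* Q') (q : Q) :
    (baseMap φ ψ).comp (wreathAction A Q q).toMonoidHom =
      (wreathAction A' Q' (ψ q)).toMonoidHom.comp (baseMap φ ψ) := by
  refine MonoidHom.ext fun f => toAdd.injective ?_
  show Finsupp.mapDomain ψ (Finsupp.mapRange φ.toAdditive (map_zero _)
      (Finsupp.equivMapDomain (Equiv.mulLeft q) (toAdd f))) =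
    Finsupp.equivMapDomain (Equiv.mulLeft (ψ q))
      (Finsupp.mapDomain ψ (Finsupp.mapRange φ.toAdditive (map_zero _) (toAdd f)))
  rw [Finsupp.equivMapDomain_eq_mapDomain, Finsupp.equivMapDomain_eq_mapDomain,
    ← Finsupp.mapDomain_mapRange _ _ _ (map_zero _) (map_add _), ← Finsupp.mapDomain_comp,
    ← Finsupp.mapDomain_comp]
  congr 1
  funext y
  exact map_mul ψ q y

noncomputable def map (φ : A →* A') (ψ : Q →* Q') : WreathProduct A Q →* WreathProduct A' Q' :=
  SemidirectProduct.map (baseMap φ ψ) ψ (baseMap_comp_wreathAction φ ψ)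

theorem baseMap_apply_of_injOn (φ : A →* A') {ψ : Q →* Q'} (f : RestrictedPower Q A) {q : Q}
    (hψ : Set.InjOn ψ (toAdd f).support) (hq : q ∈ (toAdd f).support) :
    toAdd (baseMap φ ψ f) (ψ q) = φ.toAdditive (toAdd f q) :=
  Finsupp.mapDomain_apply' _ (Finsupp.mapRange.addMonoidHom φ.toAdditive (toAdd f))
    (Finsupp.support_mapRange (hf := map_zero _)) hψ hq

end Functoriality

section ResidualFiniteness

variable {A Q : Type*} [CommGroup A] [Group Q] [Group.ResiduallyFinite A]
  [Group.ResiduallyFinite Q]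

theorem exists_map_mk_ne_one {x : WreathProduct A Q} (hx : x ≠ 1) :
    ∃ (N : FiniteIndexNormalSubgroup A) (M : FiniteIndexNormalSubgroup Q),
      map (QuotientGroup.mk' N.toSubgroup) (QuotientGroup.mk' M.toSubgroup) x ≠ 1 := by
  by_cases hright : x.right = 1
  · have hleft : toAdd x.left ≠ 0 := fun h => hx <| by
      rw [← inl_left_mul_inr_right x, hright, toAdd_eq_zero.mp h, map_one, map_one, mul_one]
    obtain ⟨q, hq⟩ := Finsupp.support_nonempty_iff.mpr hleft
    obtain ⟨N, hN⟩ := Group.exists_finiteIndexNormalSubgroup_notMem (toAdd x.left q).toMul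
      (by simpa using hq)
    obtain ⟨M, hM⟩ := Group.exists_finiteIndexNormalSubgroup_injOn (toAdd x.left).support
    refine ⟨N, M, fun h => hN ?_⟩
    have hcoord := baseMap_apply_of_injOn (QuotientGroup.mk' N.toSubgroup)
      (ψ := QuotientGroup.mk' M.toSubgroup) x.left hM hq
    rw [show baseMap _ _ x.left = 1 from congrArg SemidirectProduct.left h] at hcoord
    exact (QuotientGroup.eq_one_iff _).mp (congrArg Additive.toMul hcoord).symm
  · obtain ⟨M, hM⟩ := Group.exists_finiteIndexNormalSubgroup_notMem x.right hright
    exact ⟨.ofSubgroup ⊤, M,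
      fun h => hM ((QuotientGroup.eq_one_iff _).mp (congrArg SemidirectProduct.right h))⟩

instance : Group.ResiduallyFinite (WreathProduct A Q) :=
  Group.residuallyFinite_of_forall_exists_finite_monoidHom fun _ hx =>
    let ⟨_, _, h⟩ := exists_map_mk_ne_one hx
    ⟨_, inferInstance, inferInstance, _, h⟩

end ResidualFiniteness

end WreathProduct

/-- If `A` and `Q` are finitely generated abelian groups, then `A ≀ Q` is
finitely generated and residually finite. -/
theorem wreath_fg_and_residuallyFinite (A Q : Type*) [CommGroup A] [CommGroup Q]
    (hA : Group.FG A) (hQ : Group.FG Q) :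
    Group.FG (WreathProduct A Q) ∧
      (∀ x : WreathProduct A Q, x ≠ 1 →
        ∃ N : Subgroup (WreathProduct A Q), N.Normal ∧ N.FiniteIndex ∧ x ∉ N) := by
  refine ⟨inferInstance, fun x hx => ?_⟩
  obtain ⟨N, hN⟩ := Group.exists_finiteIndexNormalSubgroup_notMem x hx
  exact ⟨N, inferInstance, inferInstance, hN⟩
end

section
/- Let Q be a finitely generated abelian group and R a subgroup of Q. Then there exists a subgroup R₁ of Q containing R with R of finite index in R₁, and a homomorphism π : Q → R₁ such that π(r) = r for all r ∈ R (i.e., R₁ is a retract of Q containing R with finite index). -/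
/-!
Let `R₁` be the preimage in `Q` of the torsion subgroup of `Q ⧸ R`. Since `Q` is finitely generated
abelian, the torsion subgroup of `Q ⧸ R` is finite, so `R` has finite index in `R₁`. On the other
hand `Q ⧸ R₁ ≅ (Q ⧸ R) ⧸ torsion` is finitely generated and torsion-free, hence a free `ℤ`-module.
The quotient map `f : Q → Q ⧸ R₁` therefore has a section `σ`, and `q ↦ q · σ(f q)⁻¹` retracts `Q`
onto `R₁ = ker f`.
-/

open CommGroup (torsion)

theorem CommGroup.fg_subgroup {G : Type*} [CommGroup G] [Group.FG G] (H : Subgroup G) :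
    Group.FG H := by
  have : Module.Finite ℤ (Additive G) := Module.Finite.iff_addGroup_fg.mpr inferInstance
  rw [Group.fg_iff_subgroup_fg, Subgroup.fg_iff_add_fg,
    ← AddSubgroup.toIntSubmodule_toAddSubgroup H.toAddSubgroup, ← Submodule.fg_iff_addSubgroup_fg]
  exact IsNoetherian.noetherian _

instance CommGroup.finite_torsion {G : Type*} [CommGroup G] [Group.FG G] : Finite (torsion G) :=
  have := CommGroup.fg_subgroup (torsion G)
  CommGroup.finite_of_fg_isMulTorsion _ fun g => Submonoid.isOfFinOrder_coe.mp g.2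

theorem MonoidHom.finiteIndex_ker_subgroupOf_comap {G H : Type*} [Group G] [Group H]
    (f : G →* H) (T : Subgroup H) [Finite T] : (f.ker.subgroupOf (T.comap f)).FiniteIndex := by
  rw [Subgroup.finiteIndex_iff, ← Subgroup.relIndex, Subgroup.relIndex_ker]
  have : Finite ((T.comap f).map f) :=
    Set.Finite.subset (Set.toFinite T) (Subgroup.map_comap_le f T)
  exact Nat.card_pos.ne'

/-- Finitely generated torsion-free abelian groups are free, hence projective. -/
theorem MonoidHom.exists_comp_eq_id_of_surjective {G F : Type*} [CommGroup G] [CommGroup F]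
    [Group.FG F] [IsMulTorsionFree F] (f : G →* F) (hf : Function.Surjective f) :
    ∃ σ : F →* G, f.comp σ = MonoidHom.id F := by
  have : Module.Finite ℤ (Additive F) := Module.Finite.iff_addGroup_fg.mpr inferInstance
  obtain ⟨s, hs⟩ :=
    Module.projective_lifting_property f.toAdditive.toIntLinearMap LinearMap.id hf
  exact ⟨MonoidHom.toAdditive.symm s.toAddMonoidHom,
    MonoidHom.toAdditive.injective (congrArg LinearMap.toAddMonoidHom hs)⟩

theorem MonoidHom.exists_retraction_ker {G F : Type*} [CommGroup G] [Group F] (f : G →* F)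
    (σ : F →* G) (hσ : f.comp σ = MonoidHom.id F) :
    ∃ π : G →* f.ker, ∀ k ∈ f.ker, (π k : G) = k := by
  have hfσ (x : F) : f (σ x) = x := DFunLike.congr_fun hσ x
  refine ⟨(MonoidHom.id G / σ.comp f).codRestrict f.ker fun g => ?_, fun k hk => ?_⟩
  · simp [hfσ]
  · simp [f.mem_ker.mp hk]

/-- In a finitely generated abelian group `Q`, every subgroup `R` is contained
with finite index in a retract `R₁` of `Q`: there is `π : Q → R₁` fixing `R`
pointwise. -/
theorem exists_retract_containing_finite_index {Q : Type*} [CommGroup Q]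
    (hQ : Group.FG Q) (R : Subgroup Q) :
    ∃ R₁ : Subgroup Q, R ≤ R₁ ∧ (R.subgroupOf R₁).FiniteIndex ∧
      ∃ π : Q →* R₁, ∀ r ∈ R, (π r : Q) = r := by
  let f : Q →* (Q ⧸ R) ⧸ torsion (Q ⧸ R) := (QuotientGroup.mk' _).comp (QuotientGroup.mk' R)
  have hf : Function.Surjective f :=
    (QuotientGroup.mk'_surjective _).comp (QuotientGroup.mk'_surjective R)
  have hker : f.ker = (torsion (Q ⧸ R)).comap (QuotientGroup.mk' R) := by
    rw [← MonoidHom.comap_ker, QuotientGroup.ker_mk']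
  have hR : R ≤ f.ker := fun r hr => by simp [f, (QuotientGroup.eq_one_iff r).2 hr]
  have hindex : (R.subgroupOf f.ker).FiniteIndex := by
    have := (QuotientGroup.mk' R).finiteIndex_ker_subgroupOf_comap (torsion (Q ⧸ R))
    rwa [QuotientGroup.ker_mk', ← hker] at this
  obtain ⟨σ, hσ⟩ := f.exists_comp_eq_id_of_surjective hf
  obtain ⟨π, hπ⟩ := f.exists_retraction_ker σ hσ
  exact ⟨f.ker, hR, hindex, π, fun r hr => hπ r (hR hr)⟩
end

section
/- Let Q be a finitely generated abelian group of rank greater than 1 and R a nontrivial subgroup of Q of infinite index. Then Q contains a finite-index subgroup of the form R₁ × R₂ where R₁ and R₂ are both infinite, R₁ contains a finite-index subgroup of R, and the image of R in R₂ under the projection is finite. -/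
/-!
Since `Q ⧸ R` is an infinite finitely generated abelian group, the structure theorem gives a
surjection `φ : Q → ℤ` killing `R`. Choosing `q` with `φ q = 1` splits `Q` as the internal
direct product of `R₁ = ker φ` and `R₂ = ⟨q⟩ ≅ ℤ`. As `R ≤ R₁`, one may take `R' = R`, and the
projection of `R` to `R₂` is trivial. Finally `R₁` is infinite because `ℤ²` embeds in `Q` but no
homomorphism `ℤ² → ℤ` is injective, so `ker φ` contains an element of infinite order.
-/

open Function

theorem AddMonoidHom.not_injective_int_prod_int (f : ℤ × ℤ →+ ℤ) : ¬Injective f := fun hf => by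
  have := LinearMap.finrank_le_finrank_of_injective (f := f.toIntLinearMap) hf
  simp at this

theorem CommGroup.exists_surjective_monoidHom_int (G : Type*) [CommGroup G] [Group.FG G]
    [Infinite G] : ∃ φ : G →* Multiplicative ℤ, Surjective φ := by
  obtain ⟨ι, j, _, _, p, hp, e, ⟨f⟩⟩ := CommGroup.equiv_free_prod_prod_multiplicative_zmod G
  have : ∀ i, NeZero (p i ^ e i) := fun i => ⟨pow_ne_zero _ (hp i).ne_zero⟩
  rcases isEmpty_or_nonempty j with _ | ⟨⟨j₀⟩⟩
  · have := Finite.of_equiv _ f.symm.toEquiv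
    exact (not_finite G).elim
  · exact ⟨(Pi.evalMonoidHom _ j₀).comp ((MonoidHom.fst _ _).comp f.toMonoidHom),
      (surjective_eval j₀).comp (Prod.fst_surjective.comp f.surjective)⟩

theorem Subgroup.exists_surjective_monoidHom_int_le_ker {G : Type*} [CommGroup G] [Group.FG G]
    (H : Subgroup G) (hH : H.index = 0) :
    ∃ φ : G →* Multiplicative ℤ, Surjective φ ∧ H ≤ φ.ker := by
  have := H.index_eq_zero_iff_infinite.mp hH
  obtain ⟨ψ, hψ⟩ := CommGroup.exists_surjective_monoidHom_int (G ⧸ H)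
  refine ⟨ψ.comp (QuotientGroup.mk' H), hψ.comp (QuotientGroup.mk'_surjective H), fun h hh => ?_⟩
  simp [(QuotientGroup.eq_one_iff h).mpr hh]

namespace MonoidHom

variable {G : Type*} [Group G] (φ : G →* Multiplicative ℤ)

theorem infinite_ker_of_injective_int_prod_int {g : Multiplicative (ℤ × ℤ) →* G}
    (hg : Injective g) : Infinite φ.ker := by
  obtain ⟨x, hx, hx1⟩ : ∃ x, φ (g x) = 1 ∧ x ≠ 1 := by
    have : ¬Injective (φ.comp g) :=
      (AddMonoidHom.toMultiplicative.symm (φ.comp g)).not_injective_int_prod_int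
    rw [injective_iff_map_eq_one] at this
    push Not at this
    exact this
  have hpow : Injective fun k : ℤ => g (x ^ k) :=
    hg.comp (injective_zpow_iff_not_isOfFinOrder.mpr (not_isOfFinOrder_of_isMulTorsionFree hx1))
  refine Infinite.of_injective (fun k : ℤ => (⟨g (x ^ k), ?_⟩ : φ.ker)) fun k l hkl => hpow ?_
  · simp [mem_ker, hx]
  · exact congrArg Subtype.val hkl

variable {φ} {q : G}

theorem apply_zpow_of_apply_eq_ofAdd_one (hq : φ q = Multiplicative.ofAdd 1) (k : ℤ) :
    φ (q ^ k) = Multiplicative.ofAdd k := by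
  rw [map_zpow, hq, ← ofAdd_zsmul, smul_eq_mul, mul_one]

theorem ker_inf_zpowers_eq_bot_of_apply_eq_ofAdd_one (hq : φ q = Multiplicative.ofAdd 1) :
    φ.ker ⊓ Subgroup.zpowers q = ⊥ := by
  refine (Subgroup.eq_bot_iff_forall _).mpr fun x hx => ?_
  obtain ⟨hxker, hxq⟩ := Subgroup.mem_inf.mp hx
  obtain ⟨k, rfl⟩ := Subgroup.mem_zpowers_iff.mp hxq
  rw [mem_ker, apply_zpow_of_apply_eq_ofAdd_one hq] at hxker
  simp [ofAdd_eq_one.mp hxker]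

theorem ker_sup_zpowers_eq_top_of_apply_eq_ofAdd_one (hq : φ q = Multiplicative.ofAdd 1) :
    φ.ker ⊔ Subgroup.zpowers q = ⊤ := by
  refine eq_top_iff.mpr fun x _ => ?_
  set k := Multiplicative.toAdd (φ x)
  have hxk : x * (q ^ k)⁻¹ ∈ φ.ker := by
    rw [mem_ker, map_mul, map_inv, apply_zpow_of_apply_eq_ofAdd_one hq, ofAdd_toAdd,
      mul_inv_cancel]
  simpa using Subgroup.mul_mem_sup hxk (Subgroup.zpow_mem_zpowers q k)

theorem infinite_zpowers_of_apply_eq_ofAdd_one (hq : φ q = Multiplicative.ofAdd 1) :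
    Infinite (Subgroup.zpowers q) :=
  Infinite.of_injective
    (fun k : ℤ => (⟨q ^ k, Subgroup.zpow_mem_zpowers q k⟩ : Subgroup.zpowers q))
    fun k l hkl => by
      simpa [apply_zpow_of_apply_eq_ofAdd_one hq] using congrArg (φ ∘ Subtype.val) hkl

end MonoidHom

theorem exists_direct_decomposition_general {Q : Type*} [CommGroup Q]
    (hQ : Group.FG Q)
    (hrank : ∃ g : Multiplicative (ℤ × ℤ) →* Q, Function.Injective g)
    (R : Subgroup Q) (hRidx : R.index = 0) :
    ∃ R₁ R₂ : Subgroup Q, R₁ ⊓ R₂ = ⊥ ∧ (R₁ ⊔ R₂).FiniteIndex ∧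
      Infinite R₁ ∧ Infinite R₂ ∧
      (∃ R' : Subgroup Q, R' ≤ R ⊓ R₁ ∧ (R'.subgroupOf R).FiniteIndex) ∧
      {r₂ : Q | r₂ ∈ R₂ ∧ ∃ r₁ ∈ R₁, r₁ * r₂ ∈ R}.Finite := by
  obtain ⟨g, hg⟩ := hrank
  obtain ⟨φ, hφ, hRφ⟩ := R.exists_surjective_monoidHom_int_le_ker hRidx
  obtain ⟨q, hq⟩ := hφ (Multiplicative.ofAdd 1)
  have hinf := φ.ker_inf_zpowers_eq_bot_of_apply_eq_ofAdd_one hq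
  refine ⟨φ.ker, Subgroup.zpowers q, hinf, ?_, φ.infinite_ker_of_injective_int_prod_int hg,
    φ.infinite_zpowers_of_apply_eq_ofAdd_one hq, ⟨R, le_inf le_rfl hRφ, ?_⟩, ?_⟩
  · rw [φ.ker_sup_zpowers_eq_top_of_apply_eq_ofAdd_one hq]
    infer_instance
  · rw [Subgroup.subgroupOf_self]
    infer_instance
  refine (Set.finite_singleton 1).subset fun x ⟨hxq, r, hr, hrx⟩ => ?_
  have hxker : x ∈ φ.ker := by simpa using φ.ker.mul_mem (φ.ker.inv_mem hr) (hRφ hrx)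
  simpa [hinf] using Subgroup.mem_inf.mpr ⟨hxker, hxq⟩

/-- Let `Q` be a finitely generated abelian group of free rank at least 2
(witnessed by an embedding of `ℤ × ℤ`) and `R` a nontrivial subgroup of
infinite index.  Then `Q` has a finite-index subgroup `R₁ × R₂` (internal
direct product) with `R₁, R₂` infinite, such that `R₁` contains a finite-index
subgroup of `R` and the image of `R` in `R₂` under the projection is finite. -/
theorem exists_direct_decomposition {Q : Type*} [CommGroup Q]
    (hQ : Group.FG Q)
    (hrank : ∃ g : Multiplicative (ℤ × ℤ) →* Q, Function.Injective g)
    (R : Subgroup Q) (hR : R ≠ ⊥) (hRidx : R.index = 0) :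
    ∃ R₁ R₂ : Subgroup Q, R₁ ⊓ R₂ = ⊥ ∧ (R₁ ⊔ R₂).FiniteIndex ∧
      Infinite R₁ ∧ Infinite R₂ ∧
      (∃ R' : Subgroup Q, R' ≤ R ⊓ R₁ ∧ (R'.subgroupOf R).FiniteIndex) ∧
      {r₂ : Q | r₂ ∈ R₂ ∧ ∃ r₁ ∈ R₁, r₁ * r₂ ∈ R}.Finite :=
  exists_direct_decomposition_general hQ hrank R hRidx
end

section
/- If X is a finitely generated group containing a free subgroup of rank 2, then X × X is not LERF. -/
/-
Let `BS(2,3) = ⟨a, t | t a² t⁻¹ = a³⟩ = F₂ ⧸ R`. In a finite group `a²` and `a³` are conjugate,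
hence of the same order; so the order of `a` is odd, `a` is a power of `a²` and `t a t⁻¹` is a
power of `a³`, which commutes with `a`. Thus `w = ⁅t a t⁻¹, a⁆` dies in every finite quotient of
`BS(2,3)`, while Britton's lemma shows `w ≠ 1` in `BS(2,3)`. Mihailova's fiber product
`P = {(u, v) | u R = v R} ≤ F₂ × F₂` is generated by `(a, a)`, `(t, t)` and `(r, 1)`, so it is
finitely generated, and `(w, 1) ∉ P`. If `N ⊴ F₂ × F₂` has finite index, so does
`K = {u | (u, 1) ∈ N}`; then `w ∈ R K`, i.e. `(w, 1) ∈ P N`. So `P` is not separable, and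
separability pulls back along the embedding `F₂ × F₂ ↪ X × X`.
-/

open scoped Pointwise

open Subgroup
open scoped commutatorElement

instance Subgroup.finiteIndex_comap {G H : Type*} [Group G] [Group H] (N : Subgroup G)
    [N.FiniteIndex] (f : H →* G) : (N.comap f).FiniteIndex :=
  have := isFiniteRelIndex_of_finiteIndex (H := N) (K := f.range)
  ⟨by rw [index_comap]; exact relIndex_ne_zero⟩

theorem Subgroup.FG.map {G H : Type*} [Group G] [Group H] {P : Subgroup G} (hP : P.FG)
    (f : G →* H) : (P.map f).FG := by
  obtain ⟨s, rfl, hs⟩ := (fg_iff P).mp hP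
  exact (fg_iff _).mpr ⟨f '' s, (MonoidHom.map_closure f s).symm, hs.image f⟩

theorem SubgroupSeparable.of_map {G H : Type*} [Group G] [Group H] {S : Subgroup G}
    {f : G →* H} (hf : Function.Injective f) (h : SubgroupSeparable (S.map f)) :
    SubgroupSeparable S := by
  intro x hx
  obtain ⟨N, hN, hNfin, hfx⟩ := h (f x) ((mem_map_iff_mem hf).not.mpr hx)
  refine ⟨N.comap f, hN.comap f, inferInstance, ?_⟩
  rintro ⟨s, hs, k, hk, rfl⟩
  exact hfx ⟨f s, mem_map_of_mem f hs, f k, hk, (map_mul f s k).symm⟩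

section FiberProduct

variable {G : Type*} [Group G]

def fiberProduct (R : Subgroup G) [R.Normal] : Subgroup (G × G) :=
  ((QuotientGroup.mk' R).comp (MonoidHom.fst G G)).eqLocus
    ((QuotientGroup.mk' R).comp (MonoidHom.snd G G))

@[simp]
theorem mem_fiberProduct {R : Subgroup G} [R.Normal] {p : G × G} :
    p ∈ fiberProduct R ↔ (p.1 : G ⧸ R) = p.2 :=
  Iff.rfl

theorem fiberProduct_eq_closure {T Rel : Set G} (hT : closure T = ⊤) :
    fiberProduct (normalClosure Rel) =
      closure ((fun g ↦ (g, g)) '' T ∪ (fun r ↦ (r, 1)) '' Rel) := by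
  set S := closure ((fun g ↦ (g, g)) '' T ∪ (fun r ↦ (r, 1)) '' Rel)
  refine le_antisymm ?_ ((closure_le _).mpr ?_)
  · have hdiag (g : G) : (g, g) ∈ S := by
      have : (closure T).map ((MonoidHom.id G).prod (MonoidHom.id G)) ≤ S := by
        rw [MonoidHom.map_closure]
        exact closure_mono Set.subset_union_left
      exact this (mem_map_of_mem _ (hT ▸ mem_top g))
    have hnormal : (S.comap (MonoidHom.inl G G)).Normal := ⟨fun r hr g ↦ by
      simpa using mul_mem (mul_mem (hdiag g) hr) (hdiag g⁻¹)⟩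
    have hrel : normalClosure Rel ≤ S.comap (MonoidHom.inl G G) :=
      normalClosure_le_normal fun r hr ↦ subset_closure (Or.inr ⟨r, hr, rfl⟩)
    intro p hp
    have hdiv : p.1 / p.2 ∈ normalClosure Rel := QuotientGroup.eq_iff_div_mem.mp hp
    simpa using mul_mem (mem_comap.mp (hrel hdiv)) (hdiag p.2)
  · rintro _ (⟨g, -, rfl⟩ | ⟨r, hr, rfl⟩)
    · rfl
    · simpa using subset_normalClosure hr

theorem fiberProduct_fg [Group.FG G] {Rel : Set G} (hRel : Rel.Finite) :
    (fiberProduct (normalClosure Rel)).FG := by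
  obtain ⟨T, hT, hTfin⟩ := Group.fg_iff.mp ‹Group.FG G›
  rw [fiberProduct_eq_closure hT, fg_iff]
  exact ⟨_, rfl, (hTfin.image _).union (hRel.image _)⟩

theorem not_subgroupSeparable_fiberProduct {R : Subgroup G} [R.Normal] {w : G} (hw : w ∉ R)
    (hfin : ∀ (K : Subgroup G) [K.Normal] [K.FiniteIndex], w ∈ R ⊔ K) :
    ¬ SubgroupSeparable (fiberProduct R) := by
  intro hsep
  obtain ⟨N, hN, hNfin, hnot⟩ := hsep (w, 1) (by simpa [QuotientGroup.eq_one_iff] using hw)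
  obtain ⟨r, hr, k, hk, rfl⟩ :=
    mem_sup_of_normal_left.mp (hfin (N.comap (MonoidHom.inl G G)))
  exact hnot ⟨(r, 1), by simpa [QuotientGroup.eq_one_iff] using hr, (k, 1), hk, by simp⟩

end FiberProduct

theorem commute_conj_of_conj_pow_eq_pow {G : Type*} [Group G] [Finite G] {a t : G} {m n : ℕ}
    (hmn : m.Coprime n) (h : t * a ^ m * t⁻¹ = a ^ n) : Commute (t * a * t⁻¹) a := by
  have hconj (g : G) : t * g * t⁻¹ = MulAut.conj t g := rfl
  have horder : orderOf a / (orderOf a).gcd m = orderOf a / (orderOf a).gcd n := by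
    rw [← orderOf_pow, ← orderOf_pow, ← h, hconj, MulEquiv.orderOf_eq]
  have hpos : orderOf a ≠ 0 := (orderOf_pos a).ne'
  have hgcd : (orderOf a).gcd m = (orderOf a).gcd n := by
    rw [← Nat.div_div_self (Nat.gcd_dvd_left _ m) hpos, horder,
      Nat.div_div_self (Nat.gcd_dvd_left _ n) hpos]
  have hcop : m.gcd (orderOf a) = 1 := by
    rw [Nat.gcd_comm, ← Nat.dvd_one, ← hmn.gcd_eq_one]
    exact Nat.dvd_gcd (Nat.gcd_dvd_right _ _) (hgcd ▸ Nat.gcd_dvd_right _ _)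
  obtain ⟨k, hk⟩ := mem_zpowers_iff.mp (mem_zpowers_pow_iff.mpr hcop)
  have hta : t * a * t⁻¹ = (a ^ n) ^ k :=
    calc t * a * t⁻¹ = MulAut.conj t ((a ^ m) ^ k) := by rw [hk]; rfl
      _ = (a ^ n) ^ k := by rw [map_zpow, ← hconj, h]
  rw [hta]
  exact ((Commute.refl a).pow_left n).zpow_left k

namespace BaumslagSolitar

def a : FreeGroup (Fin 2) := .of 0

def t : FreeGroup (Fin 2) := .of 1

def relator (m n : ℕ) : FreeGroup (Fin 2) := t * a ^ m * t⁻¹ * (a ^ n)⁻¹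

def witness : FreeGroup (Fin 2) := ⁅t * a * t⁻¹, a⁆

theorem map_witness_eq_one {Q : Type*} [Group Q] [Finite Q] {m n : ℕ} (hmn : m.Coprime n)
    (π : FreeGroup (Fin 2) →* Q) (hπ : π (relator m n) = 1) : π witness = 1 := by
  simp only [relator, map_mul, map_inv, map_pow, mul_inv_eq_one] at hπ
  rw [witness, map_commutatorElement, commutatorElement_eq_one_iff_commute]
  simpa only [map_mul, map_inv] using commute_conj_of_conj_pow_eq_pow hmn hπ

theorem witness_mem_sup_of_finiteIndex {m n : ℕ} (hmn : m.Coprime n)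
    (K : Subgroup (FreeGroup (Fin 2))) [K.Normal] [K.FiniteIndex] :
    witness ∈ normalClosure {relator m n} ⊔ K := by
  have : (normalClosure {relator m n} ⊔ K).FiniteIndex := finiteIndex_of_le le_sup_right
  refine (QuotientGroup.eq_one_iff _).mp (map_witness_eq_one hmn (QuotientGroup.mk' _) ?_)
  exact (QuotientGroup.eq_one_iff _).mpr (mem_sup_left (subset_normalClosure rfl))

theorem ofAdd_one_notMem_range_powMonoidHom {l : ℕ} (hl : l ≠ 1) :
    Multiplicative.ofAdd 1 ∉ (powMonoidHom l : Multiplicative ℤ →* Multiplicative ℤ).range := by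
  rintro ⟨x, hx⟩
  have : (l : ℤ) * x.toAdd = 1 := by simpa using congrArg Multiplicative.toAdd hx
  exact hl (by exact_mod_cast Int.eq_one_of_mul_eq_one_right (by positivity) this)

variable (m n : ℕ) [NeZero m] [NeZero n]

noncomputable def powRangeEquiv : (powMonoidHom m : Multiplicative ℤ →* Multiplicative ℤ).range ≃*
    (powMonoidHom n : Multiplicative ℤ →* Multiplicative ℤ).range :=
  (MonoidHom.ofInjective (pow_left_injective (NeZero.ne m))).symm.trans
    (MonoidHom.ofInjective (pow_left_injective (NeZero.ne n)))

theorem powRangeEquiv_apply (x : Multiplicative ℤ) :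
    powRangeEquiv m n ⟨powMonoidHom m x, x, rfl⟩ = ⟨powMonoidHom n x, x, rfl⟩ := by
  have : (MonoidHom.ofInjective (pow_left_injective (NeZero.ne m))).symm
      ⟨powMonoidHom m x, x, rfl⟩ = x :=
    (MulEquiv.symm_apply_eq _).mpr (Subtype.ext (MonoidHom.ofInjective_apply _).symm)
  rw [powRangeEquiv, MulEquiv.trans_apply, this]
  exact Subtype.ext (MonoidHom.ofInjective_apply _)

/-- `BS(m, n)` as the HNN extension of `ℤ` along `mℤ ≅ nℤ`, `k m ↦ k n`. -/
abbrev HNNModel := HNNExtension (Multiplicative ℤ) _ _ (powRangeEquiv m n)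

noncomputable def toHNNModel : FreeGroup (Fin 2) →* HNNModel m n :=
  FreeGroup.lift ![HNNExtension.of (Multiplicative.ofAdd 1), HNNExtension.t]

theorem toHNNModel_relator : toHNNModel m n (relator m n) = 1 := by
  have := HNNExtension.equiv_eq_conj (φ := powRangeEquiv m n) ⟨_, Multiplicative.ofAdd 1, rfl⟩
  rw [powRangeEquiv_apply] at this
  simp only [powMonoidHom_apply, map_pow] at this
  simp [relator, toHNNModel, a, t, ← this]

theorem toHNNModel_witness_ne_one (hm : m ≠ 1) (hn : n ≠ 1) : toHNNModel m n witness ≠ 1 := by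
  let w : HNNExtension.NormalWord.ReducedWord (Multiplicative ℤ)
      (powMonoidHom m : Multiplicative ℤ →* Multiplicative ℤ).range (powMonoidHom n).range :=
    { head := 1
      toList := [(1, .ofAdd 1), (-1, .ofAdd 1), (1, .ofAdd (-1)), (-1, .ofAdd (-1))]
      chain := by
        have hA := ofAdd_one_notMem_range_powMonoidHom hm
        have hB := ofAdd_one_notMem_range_powMonoidHom hn
        simp [HNNExtension.toSubgroup, hA, hB, -MonoidHom.mem_range] }
  have hprod : w.prod (powRangeEquiv m n) = toHNNModel m n witness := by
    simp [w, HNNExtension.NormalWord.ReducedWord.prod, toHNNModel, witness, a, t,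
      commutatorElement_def, mul_assoc]
  intro h
  have := HNNExtension.ReducedWord.toList_eq_nil_of_mem_of_range _ w (hprod ▸ h ▸ one_mem _)
  simp [w] at this

theorem witness_notMem_normalClosure {m n : ℕ} (hm : 2 ≤ m) (hn : 2 ≤ n) :
    witness ∉ normalClosure {relator m n} := by
  have : NeZero m := ⟨by omega⟩
  have : NeZero n := ⟨by omega⟩
  have hker : normalClosure {relator m n} ≤ (toHNNModel m n).ker :=
    normalClosure_le_normal (by simp [toHNNModel_relator])
  exact fun hw ↦ toHNNModel_witness_ne_one m n (by omega) (by omega) (hker hw)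

end BaumslagSolitar

theorem not_LERF_of_contains_free_general {X : Type*} [Group X]
    (hfree : ∃ f : FreeGroup (Fin 2) →* X, Function.Injective f) :
    ¬ (∀ S : Subgroup (X × X), S.FG → SubgroupSeparable S) := by
  intro hLERF
  obtain ⟨f, hf⟩ := hfree
  open BaumslagSolitar in
  have hP : ¬ SubgroupSeparable (fiberProduct (normalClosure {relator 2 3})) :=
    not_subgroupSeparable_fiberProduct (witness_notMem_normalClosure le_rfl (by norm_num))
      (witness_mem_sup_of_finiteIndex (by norm_num))
  have hPfg := fiberProduct_fg (Set.finite_singleton (BaumslagSolitar.relator 2 3))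
  exact hP ((hLERF _ (hPfg.map (f.prodMap f))).of_map (hf.prodMap hf))

/-- If a finitely generated group `X` contains a free group of rank 2, then
`X × X` is not LERF. -/
theorem not_LERF_of_contains_free {X : Type*} [Group X] (hX : Group.FG X)
    (hfree : ∃ f : FreeGroup (Fin 2) →* X, Function.Injective f) :
    ¬ (∀ S : Subgroup (X × X), S.FG → SubgroupSeparable S) :=
  not_LERF_of_contains_free_general hfree
end

section
/- Let Γ = K ⋊ S with K abelian normal, and suppose for every nontrivial x ∈ K there exist a finite-index subgroup M of K with x ∉ M and a finite-index subgroup T of S normalizing M such that M ⋊ T has finite index in Γ. Then S is closed in the profinite topology of Γ. -/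
/-! Given `x = s * k ∉ S` with `s ∈ S` and `1 ≠ k ∈ K`, choose `M`, `T` for `k`. The coset
`x (M ⋊ T)` misses `S`: if `s k m t ∈ S` then `k m ∈ K ∩ S = 1`, so `k = m⁻¹ ∈ M`. Since
`M ⋊ T` has finite index, this coset contains a coset of its normal core, a basic open set
of the profinite topology. -/

namespace profiniteTopology

variable {G : Type*} [Group G]

lemma isOpen_leftCoset {N : Subgroup G} [hN : N.Normal] [hfin : N.FiniteIndex] (g : G) :
    @IsOpen G (profiniteTopology G) {x : G | ∃ n ∈ N, x = g * n} :=
  TopologicalSpace.GenerateOpen.basic _ ⟨N, g, hN, hfin, rfl⟩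

lemma isClosed_of_forall_notMem_exists_finiteIndex {A : Set G}
    (hA : ∀ x ∉ A, ∃ H : Subgroup G, H.FiniteIndex ∧ ∀ h ∈ H, x * h ∉ A) :
    @IsClosed G (profiniteTopology G) A := by
  let _ := profiniteTopology G
  refine isOpen_compl_iff.mp (isOpen_iff_forall_mem_open.mpr fun x hx => ?_)
  obtain ⟨H, hH, hxH⟩ := hA x hx
  refine ⟨{y | ∃ n ∈ H.normalCore, y = x * n}, ?_, isOpen_leftCoset x, 1, one_mem _, by simp⟩
  rintro _ ⟨n, hn, rfl⟩
  exact hxH n (H.normalCore_le hn)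

end profiniteTopology

section Complement

variable {G : Type*} [Group G] {K S M T : Subgroup G}

lemma mul_mul_notMem_of_inf_eq_bot (hdisj : K ⊓ S = ⊥) (hMK : M ≤ K) (hTS : T ≤ S)
    (hT : T ≤ Subgroup.normalizer (M : Set G)) {s k : G} (hs : s ∈ S) (hk : k ∈ K)
    (hkM : k ∉ M) {n : G} (hn : n ∈ M ⊔ T) : s * k * n ∉ S := by
  rw [← SetLike.mem_coe, Subgroup.coe_mul_of_right_le_normalizer_left M T hT] at hn
  obtain ⟨m, hm, t, ht, rfl⟩ := hn
  intro hS
  have hkmS : k * m ∈ S := by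
    simpa [mul_assoc] using mul_mem (mul_mem (inv_mem hs) hS) (inv_mem (hTS ht))
  have hkm : k * m = 1 := by
    simpa [hdisj] using Subgroup.mem_inf.mpr ⟨mul_mem hk (hMK hm), hkmS⟩
  exact hkM (eq_inv_of_mul_eq_one_left hkm ▸ inv_mem hm)

end Complement

theorem complement_closed_of_avoiding_subgroups_general {Γ : Type*} [Group Γ]
    (K S : Subgroup Γ) (hKn : K.Normal)
    (hdisj : K ⊓ S = ⊥) (hjoin : K ⊔ S = ⊤)
    (h : ∀ x ∈ K, x ≠ 1 →
      ∃ M T : Subgroup Γ, M ≤ K ∧ (M.subgroupOf K).FiniteIndex ∧ x ∉ M ∧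
        T ≤ S ∧ (T.subgroupOf S).FiniteIndex ∧ T ≤ Subgroup.normalizer (M : Set Γ) ∧
        (M ⊔ T).FiniteIndex) :
    @IsClosed Γ (profiniteTopology Γ) (S : Set Γ) := by
  refine profiniteTopology.isClosed_of_forall_notMem_exists_finiteIndex fun x hx => ?_
  have hxSK : x ∈ ((S ⊔ K : Subgroup Γ) : Set Γ) := by simp [sup_comm, hjoin]
  rw [Subgroup.mul_normal S K] at hxSK
  obtain ⟨s, hs, k, hk, rfl⟩ := hxSK
  have hk1 : k ≠ 1 := by
    rintro rfl
    exact hx (by simpa using hs)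
  obtain ⟨M, T, hMK, -, hkM, hTS, -, hT, hMT⟩ := h k hk hk1
  exact ⟨M ⊔ T, hMT, fun n hn => mul_mul_notMem_of_inf_eq_bot hdisj hMK hTS hT hs hk hkM hn⟩

/-- Let `Γ = K ⋊ S` with `K` abelian normal.  If for every nontrivial `x ∈ K`
there are a finite-index subgroup `M` of `K` avoiding `x` and a finite-index
subgroup `T` of `S` normalizing `M` with `M ⋊ T` of finite index in `Γ`, then
`S` is closed in the profinite topology of `Γ`. -/
theorem complement_closed_of_avoiding_subgroups {Γ : Type*} [Group Γ]
    (K S : Subgroup Γ) (hKn : K.Normal)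
    (hKab : ∀ x y : Γ, x ∈ K → y ∈ K → x * y = y * x)
    (hdisj : K ⊓ S = ⊥) (hjoin : K ⊔ S = ⊤)
    (h : ∀ x ∈ K, x ≠ 1 →
      ∃ M T : Subgroup Γ, M ≤ K ∧ (M.subgroupOf K).FiniteIndex ∧ x ∉ M ∧
        T ≤ S ∧ (T.subgroupOf S).FiniteIndex ∧ T ≤ Subgroup.normalizer (M : Set Γ) ∧
        (M ⊔ T).FiniteIndex) :
    @IsClosed Γ (profiniteTopology Γ) (S : Set Γ) :=
  complement_closed_of_avoiding_subgroups_general K S hKn hdisj hjoin h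
end
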